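/- Real idempotent factorization: every real tensor A ∈ ℝ^{n×n×p} can be written as A = U * E * V, where U, V ∈ ℝ^{n×n×p} are t-invertible and E ∈ ℝ^{n×n×p} is idempotent with respect to the t-product (E * E = E). -/

import Mathlib

open Matrix Complex BigOperators Kronecker

/-- A third-order tensor, represented by its frontal slices (indexed cyclically). -/
abbrev Tensor (F : Type*) (m n p : ℕ) : Type _ :=
  ZMod p → Matrix (Fin m) (Fin n) F

/-- The block-circulant matrix of a tensor: block (i,j) is slice (i - j mod p). -/
def bcirc {F : Type*} {m n p : ℕ} (A : Tensor F m n p) :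
    Matrix (ZMod p × Fin m) (ZMod p × Fin n) F :=
  Matrix.of fun ir jc => A (ir.1 - jc.1) ir.2 jc.2

/-- The t-product of tensors: (A*B)^{(i)} = ∑_j A^{(i-j)} B^{(j)}. -/
def tpr {F : Type*} [CommRing F] {m n l p : ℕ} [NeZero p]
    (A : Tensor F m n p) (B : Tensor F n l p) : Tensor F m l p :=
  fun i => ∑ j : ZMod p, A (i - j) * B j

/-- The identity tensor: first frontal slice is I_n, others are zero. -/
def tId (F : Type*) [CommRing F] (n p : ℕ) [NeZero p] : Tensor F n n p :=
  fun i => if i = 0 then 1 else 0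

/-- Tensor transpose: transpose each slice and reverse the order of slices 2..p. -/
def tT {F : Type*} {m n p : ℕ} (A : Tensor F m n p) : Tensor F n m p :=
  fun i => (A (-i))ᵀ

/-- ξ = e^{-2πi/p}. -/
noncomputable def xi (p : ℕ) : ℂ :=
  Complex.exp (-(2 * Real.pi * Complex.I) / p)

/-- The normalized DFT matrix of order p. -/
noncomputable def Fmat (p : ℕ) : Matrix (ZMod p) (ZMod p) ℂ :=
  Matrix.of fun j k => (1 / (Real.sqrt p : ℂ)) * xi p ^ (j.val * k.val)

/-- The Fourier blocks of a complex tensor: A_i = ∑_k ξ^{(i)(k)} A^{(k)} (0-based). -/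
noncomputable def fblock {m n p : ℕ} [NeZero p] (A : Tensor ℂ m n p) (i : ZMod p) :
    Matrix (Fin m) (Fin n) ℂ :=
  ∑ k : ZMod p, xi p ^ (i.val * k.val) • A k

/-- Complexification of a real tensor. -/
def cplx {m n p : ℕ} (A : Tensor ℝ m n p) : Tensor ℂ m n p :=
  fun i => (A i).map (Complex.ofReal)

/-- Block diagonal matrix with p equal-size blocks. -/
def blockDiag {m n p : ℕ} (M : ZMod p → Matrix (Fin m) (Fin n) ℂ) :
    Matrix (ZMod p × Fin m) (ZMod p × Fin n) ℂ :=
  Matrix.of fun ir jc => if ir.1 = jc.1 then M ir.1 ir.2 jc.2 else 0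

/-- Entrywise conjugation of a complex matrix. -/
def conjM {m n : ℕ} (M : Matrix (Fin m) (Fin n) ℂ) : Matrix (Fin m) (Fin n) ℂ :=
  M.map (starRingEnd ℂ)

/-- A complex matrix is real if all entries have zero imaginary part. -/
def IsRealM {m n : ℕ} (M : Matrix (Fin m) (Fin n) ℂ) : Prop :=
  ∀ r c, (M r c).im = 0

/-!
Under the discrete Fourier transform along the third mode the t-product becomes blockwise matrix
multiplication, the blocks of a real tensor satisfy `conj Â k = Â (-k)`, and every
conjugate-symmetric family of blocks comes from a real tensor. Over a field every square matrix
is a unit times an idempotent. Factoring one block of each pair `{k, -k}` and conjugating the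
factors for the other, and factoring the self-conjugate blocks over `ℝ`, yields a
conjugate-symmetric family of factorizations, hence real tensors `U` and `E` with `A = U * E`;
`V` is the identity.
-/

open ZMod

theorem Function.Involutive.exists_equivariant_choice {ι X : Type*} {τ : ι → ι}
    (hτ : Function.Involutive τ) {σ : X → X} (hσ : Function.Involutive σ)
    {P : ι → X → Prop}
    (hP : ∀ i x, P i x → P (τ i) (σ x)) (hex : ∀ i, ∃ x, P i x)
    (hfix : ∀ i, τ i = i → ∃ x, P i x ∧ σ x = x) :
    ∃ f : ι → X, ∀ i, P i (f i) ∧ σ (f i) = f (τ i) := by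
  classical
  let _ : LinearOrder ι := WellOrderingRel.isWellOrder.linearOrder
  choose c hc using hex
  choose d hd using hfix
  -- on each two-element orbit `{i, τ i}` the choice is made at the smaller point
  let f : ι → X := fun i =>
    if h : τ i = i then d i h else if i < τ i then c i else σ (c (τ i))
  refine ⟨f, fun i => ?_⟩
  by_cases hi : τ i = i
  · have hfi : f i = d i hi := dif_pos hi
    rw [hi, hfi]
    exact hd i hi
  have hi' : τ (τ i) ≠ τ i := by rwa [hτ i, ne_comm]
  rcases lt_or_gt_of_ne (Ne.symm hi) with hlt | hgt
  · have hfi : f i = c i := by simp only [f, dif_neg hi, if_pos hlt]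
    have hfτi : f (τ i) = σ (c i) := by
      simp only [f, dif_neg hi', hτ i, if_neg (not_lt_of_gt hlt)]
    exact ⟨hfi ▸ hc i, by rw [hfi, hfτi]⟩
  · have hfi : f i = σ (c (τ i)) := by simp only [f, dif_neg hi, if_neg (not_lt_of_gt hgt)]
    have hfτi : f (τ i) = c (τ i) := by simp only [f, dif_neg hi', hτ i, if_pos hgt]
    refine ⟨?_, by rw [hfi, hfτi, hσ]⟩
    rw [hfi]
    simpa only [hτ i] using hP _ _ (hc (τ i))

theorem Module.End.exists_unit_mul_isIdempotentElem {K V : Type*} [Field K] [AddCommGroup V]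
    [Module K V] [FiniteDimensional K V] (f : Module.End K V) :
    ∃ (u : (Module.End K V)ˣ) (e : Module.End K V), IsIdempotentElem e ∧ f = u * e := by
  obtain ⟨C, hC⟩ := (LinearMap.ker f).exists_isCompl
  obtain ⟨D, hD⟩ := (LinearMap.range f).exists_isCompl
  have hdim : Module.finrank K (LinearMap.ker f) = Module.finrank K D := by
    have := Submodule.finrank_add_eq_of_isCompl hD
    have := LinearMap.finrank_range_add_finrank_ker f
    omega
  obtain ⟨eK⟩ := FiniteDimensional.nonempty_linearEquiv_of_finrank_eq hdim
  let eC : C ≃ₗ[K] LinearMap.range f :=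
    (Submodule.quotientEquivOfIsCompl _ C hC).symm ≪≫ₗ f.quotKerEquivRange
  have heC (c : C) : (eC c : V) = f c := by
    simp [eC, Submodule.quotientEquivOfIsCompl_symm_apply, LinearMap.quotKerEquivRange_apply_mk]
  -- `u` maps `C ⊕ ker f` onto `range f ⊕ D`, by `f` on `C` and by `eK` on `ker f`
  let u : V ≃ₗ[K] V := (Submodule.prodEquivOfIsCompl C _ hC.symm).symm ≪≫ₗ
    eC.prodCongr eK ≪≫ₗ Submodule.prodEquivOfIsCompl _ D hD
  let e := C.projection (LinearMap.ker f) hC.symm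
  refine ⟨LinearMap.GeneralLinearGroup.ofLinearEquiv u, e,
    Submodule.isIdempotentElem_projection hC.symm, LinearMap.ext fun x => ?_⟩
  have hfe : f (e x) = f x := by
    have hsum := Submodule.projection_add_projection_eq_self hC.symm x
    have hker := Submodule.projection_apply_mem hC x
    rw [LinearMap.mem_ker] at hker
    conv_rhs => rw [← hsum, map_add, hker, add_zero]
  have hec : e x = (C.projectionOnto _ hC.symm x : V) := rfl
  change f x = u (e x)
  rw [← hfe, hec]
  simp only [u, LinearEquiv.trans_apply, Submodule.prodEquivOfIsCompl_symm_apply_left,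
    LinearEquiv.prodCongr_apply, map_zero, Submodule.coe_prodEquivOfIsCompl', heC,
    Submodule.coe_zero, add_zero]

theorem Matrix.exists_unit_mul_isIdempotentElem {K ι : Type*} [Field K] [Fintype ι]
    [DecidableEq ι] (M : Matrix ι ι K) :
    ∃ (u : (Matrix ι ι K)ˣ) (e : Matrix ι ι K), IsIdempotentElem e ∧ M = u * e := by
  obtain ⟨u, e, he, hf⟩ := Module.End.exists_unit_mul_isIdempotentElem (Matrix.toLinAlgEquiv' M)
  let φ : Module.End K (ι → K) ≃ₐ[K] Matrix ι ι K := Matrix.toLinAlgEquiv'.symm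
  refine ⟨Units.map (φ : Module.End K (ι → K) →* Matrix ι ι K) u, φ e, he.map φ, ?_⟩
  rw [Units.coe_map, MonoidHom.coe_coe, ← map_mul, ← hf]
  exact (Matrix.toLinAlgEquiv'.symm_apply_apply M).symm

lemma conjM_conjM {m n : ℕ} (X : Matrix (Fin m) (Fin n) ℂ) : conjM (conjM X) = X := by
  ext r c; simp [conjM]

lemma conjM_map_ofReal {m n : ℕ} (X : Matrix (Fin m) (Fin n) ℝ) :
    conjM (X.map Complex.ofReal) = X.map Complex.ofReal := by
  ext r c; simp [conjM]

lemma exists_map_ofReal_eq_of_conjM_eq {m n : ℕ} {X : Matrix (Fin m) (Fin n) ℂ}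
    (h : conjM X = X) :
    ∃ Y : Matrix (Fin m) (Fin n) ℝ, Y.map Complex.ofReal = X := by
  refine ⟨X.map Complex.re, ?_⟩
  ext r c
  exact Complex.conj_eq_iff_re.mp congr($h r c)

theorem exists_unit_mul_isIdempotentElem_conjM_symm {n p : ℕ}
    (Ψ : ZMod p → Matrix (Fin n) (Fin n) ℂ) (hΨ : ∀ k, conjM (Ψ k) = Ψ (-k)) :
    ∃ (u : ZMod p → (Matrix (Fin n) (Fin n) ℂ)ˣ) (e : ZMod p → Matrix (Fin n) (Fin n) ℂ),
      ∀ k, IsIdempotentElem (e k) ∧ Ψ k = u k * e k ∧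
        conjM (u k).val = (u (-k)).val ∧ conjM (u k).inv = (u (-k)).inv ∧
        conjM (e k) = e (-k) := by
  let κ : Matrix (Fin n) (Fin n) ℂ →+* Matrix (Fin n) (Fin n) ℂ :=
    (starRingEnd ℂ).mapMatrix
  have hκ (M) : κ M = conjM M := rfl
  let σ : (Matrix (Fin n) (Fin n) ℂ)ˣ × Matrix (Fin n) (Fin n) ℂ → _ :=
    fun x => (Units.map κ.toMonoidHom x.1, κ x.2)
  have hσ : Function.Involutive σ := fun x => by
    ext <;> simp [σ, hκ, conjM_conjM]
  let P : ZMod p → (Matrix (Fin n) (Fin n) ℂ)ˣ × Matrix (Fin n) (Fin n) ℂ → Prop :=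
    fun k x => IsIdempotentElem x.2 ∧ Ψ k = x.1 * x.2
  have hP (k x) (hx : P k x) : P (-k) (σ x) :=
    ⟨hx.1.map κ, by rw [← hΨ, ← hκ, hx.2, map_mul]; rfl⟩
  have hex (k) : ∃ x, P k x := by
    obtain ⟨u, e, he, h⟩ := (Ψ k).exists_unit_mul_isIdempotentElem
    exact ⟨(u, e), he, h⟩
  have hfix (k) (hk : -k = k) : ∃ x, P k x ∧ σ x = x := by
    have hreal : conjM (Ψ k) = Ψ k := by rw [hΨ, hk]
    obtain ⟨R, hR⟩ := exists_map_ofReal_eq_of_conjM_eq hreal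
    obtain ⟨u, e, he, h⟩ := R.exists_unit_mul_isIdempotentElem
    let ρ : Matrix (Fin n) (Fin n) ℝ →+* Matrix (Fin n) (Fin n) ℂ :=
      Complex.ofRealHom.mapMatrix
    refine ⟨(Units.map ρ.toMonoidHom u, ρ e), ⟨he.map ρ, ?_⟩, ?_⟩
    · rw [← hR, h]
      exact map_mul ρ _ _
    · exact Prod.ext (Units.ext (conjM_map_ofReal _)) (conjM_map_ofReal _)
  obtain ⟨f, hf⟩ := neg_involutive.exists_equivariant_choice hσ hP hex hfix
  refine ⟨fun k => (f k).1, fun k => (f k).2, fun k => ⟨(hf k).1.1, (hf k).1.2, ?_⟩⟩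
  simp only [← (hf k).2]
  exact ⟨rfl, rfl, rfl⟩

lemma tpr_tId {F : Type*} [CommRing F] {m n p : ℕ} [NeZero p] (A : Tensor F m n p) :
    tpr A (tId F n p) = A := by
  funext i
  rw [tpr, Finset.sum_eq_single 0 (fun j _ hj => by simp [tId, hj]) (by simp)]
  simp [tId]

lemma cplx_injective {m n p : ℕ} : Function.Injective (cplx (m := m) (n := n) (p := p)) := by
  intro X Y h
  funext i
  ext r c
  simpa [cplx] using congr($h i r c)

section Fourier

variable {m n l p : ℕ} [NeZero p]

lemma dft_tpr (A : Tensor ℂ m n p) (B : Tensor ℂ n l p) (k : ZMod p) :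
    𝓕 (tpr A B) k = 𝓕 A k * 𝓕 B k := by
  simp only [dft_apply, tpr, Finset.smul_sum, Matrix.sum_mul, Matrix.mul_sum]
  conv_lhs => rw [Finset.sum_comm]
  refine Finset.sum_congr rfl fun j _ => ?_
  refine Fintype.sum_equiv (Equiv.subRight j) _ _ fun i => ?_
  rw [Equiv.subRight_apply, Matrix.smul_mul, Matrix.mul_smul, smul_smul,
    ← AddChar.map_add_eq_mul]
  congr 2
  ring

lemma dft_tId (k : ZMod p) : 𝓕 (tId ℂ n p) k = 1 := by
  rw [dft_apply, Finset.sum_eq_single 0 (fun j _ hj => by simp [tId, hj]) (by simp)]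
  simp [tId]

lemma conjM_dft (Φ : Tensor ℂ m n p) (k : ZMod p) :
    conjM (𝓕 Φ k) = 𝓕 (fun j => conjM (Φ j)) (-k) := by
  ext r c
  simp [conjM, dft_apply, Matrix.sum_apply, AddChar.map_neg_eq_conj]

lemma cplx_tpr (A : Tensor ℝ m n p) (B : Tensor ℝ n l p) :
    cplx (tpr A B) = tpr (cplx A) (cplx B) := by
  funext i
  ext r c
  simp [cplx, tpr, Matrix.sum_apply, Matrix.mul_apply]

lemma cplx_tId : cplx (tId ℝ n p) = tId ℂ n p := by
  funext i
  by_cases hi : i = 0 <;> simp [cplx, tId, hi]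

lemma conjM_dft_cplx (A : Tensor ℝ m n p) (k : ZMod p) :
    conjM (𝓕 (cplx A) k) = 𝓕 (cplx A) (-k) := by
  rw [conjM_dft]
  simp only [cplx, conjM_map_ofReal]
  rfl

lemma exists_dft_cplx_eq {Ψ : Tensor ℂ m n p} (hΨ : ∀ k, conjM (Ψ k) = Ψ (-k)) :
    ∃ X : Tensor ℝ m n p, 𝓕 (cplx X) = Ψ := by
  have hreal : (fun j => conjM (𝓕⁻ Ψ j)) = 𝓕⁻ Ψ := by
    apply dft.injective
    funext k
    rw [← neg_neg k, ← conjM_dft, LinearEquiv.apply_symm_apply, hΨ]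
  choose X hX using fun j => exists_map_ofReal_eq_of_conjM_eq (congr_fun hreal j)
  exact ⟨X, by rw [show cplx X = 𝓕⁻ Ψ from funext hX, LinearEquiv.apply_symm_apply]⟩

lemma tpr_eq_iff (X : Tensor ℝ m n p) (Y : Tensor ℝ n l p) (Z : Tensor ℝ m l p) :
    tpr X Y = Z ↔ ∀ k, 𝓕 (cplx X) k * 𝓕 (cplx Y) k = 𝓕 (cplx Z) k := by
  rw [← cplx_injective.eq_iff, ← dft.injective.eq_iff, cplx_tpr, funext_iff]
  simp only [dft_tpr]

lemma dft_cplx_tId (k : ZMod p) : 𝓕 (cplx (tId ℝ n p)) k = 1 := by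
  rw [cplx_tId, dft_tId]

end Fourier

theorem stmt10 {n p : ℕ} [NeZero p] (A : Tensor ℝ n n p) :
    ∃ U Uinv V Vinv E : Tensor ℝ n n p,
      tpr U Uinv = tId ℝ n p ∧ tpr Uinv U = tId ℝ n p ∧
      tpr V Vinv = tId ℝ n p ∧ tpr Vinv V = tId ℝ n p ∧
      tpr E E = E ∧
      A = tpr U (tpr E V) := by
  obtain ⟨u, e, hfac⟩ :=
    exists_unit_mul_isIdempotentElem_conjM_symm (𝓕 (cplx A)) (conjM_dft_cplx A)
  obtain ⟨U, hU⟩ := exists_dft_cplx_eq fun k => (hfac k).2.2.1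
  obtain ⟨Uinv, hUinv⟩ := exists_dft_cplx_eq fun k => (hfac k).2.2.2.1
  obtain ⟨E, hE⟩ := exists_dft_cplx_eq fun k => (hfac k).2.2.2.2
  refine ⟨U, Uinv, tId ℝ n p, tId ℝ n p, E, ?_, ?_, tpr_tId _, tpr_tId _, ?_, ?_⟩
  · simp only [tpr_eq_iff, hU, hUinv, dft_cplx_tId, Units.val_inv, implies_true]
  · simp only [tpr_eq_iff, hU, hUinv, dft_cplx_tId, Units.inv_val, implies_true]
  · simp only [tpr_eq_iff, hE]
    exact fun k => (hfac k).1
  · rw [tpr_tId, eq_comm, tpr_eq_iff, hU, hE]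
    exact fun k => ((hfac k).2.1).symm
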